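/- arXiv:1405.6344 — 5 statements merged into one kernel-verified Lean document; each statement's English description precedes it below -/
import Mathlib

section
/- For 0 < β ≤ 1 and n ≥ 1, the integral over the simplex S(n) of ∏_{k=1}^n (s_k - s_{k-1})^{β-1} (with s_0 = 0) equals Γ(β)^n / Γ(1 + nβ). -/
/-! Fix the first point `s 0 = t ∈ (0, 1)`. The remaining points are `t + (1 - t) v` with `v`
ranging over the simplex of one dimension less, and every gap is scaled by `1 - t`. Fubini and
this affine change of variables give
`W (n + 1) = W n * ∫₀¹ t ^ (β - 1) (1 - t) ^ (n β) dt = W n * B(β, n β + 1)`,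
and `B(a, b) = Γ(a) Γ(b) / Γ(a + b)` yields the closed form by induction. Working with lower
Lebesgue integrals keeps integrability out of the induction. -/

open MeasureTheory Real Filter

def sPrev {n : ℕ} (s : Fin n → ℝ) (k : Fin n) : ℝ :=
  if (k : ℕ) = 0 then 0 else s ⟨(k : ℕ) - 1, lt_of_le_of_lt (Nat.sub_le _ _) k.isLt⟩

/-- The open simplex `{0 < s 0 < s 1 < ... < s (n-1) < 1}`. -/
def simplexSet (n : ℕ) : Set (Fin n → ℝ) :=
  {s | (∀ k, sPrev s k < s k) ∧ ∀ k, s k < 1}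

/-- The singular weight `R_α(s) = ∏ (s_k - s_{k-1})^{-α_k}`. -/
noncomputable def polyR {n : ℕ} (α : Fin n → ℝ) (s : Fin n → ℝ) : ℝ :=
  ∏ k, (s k - sPrev s k) ^ (-(α k))

/-- The normalizing constant `K_n(α)`. -/
noncomputable def polyK (n : ℕ) (α : Fin n → ℝ) : ℝ :=
  (∏ k, Real.Gamma (1 - α k)) / Real.Gamma (1 + ∑ k, (1 - α k))

open scoped ENNReal

lemma lintegral_rpow_mul_one_sub_rpow {a b : ℝ} (ha : 0 < a) (hb : 0 < b) :
    ∫⁻ x in Set.Ioo 0 1, ENNReal.ofReal (x ^ (a - 1) * (1 - x) ^ (b - 1)) =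
      ENNReal.ofReal (Gamma a * Gamma b / Gamma (a + b)) := by
  have hB := ProbabilityTheory.beta_pos ha hb
  have h := ProbabilityTheory.lintegral_betaPDF_eq_one ha hb
  simp_rw [ProbabilityTheory.lintegral_betaPDF, mul_assoc,
    ENNReal.ofReal_mul (one_div_pos.2 hB).le] at h
  rw [lintegral_const_mul' _ _ ENNReal.ofReal_ne_top, one_div,
    ENNReal.ofReal_inv_of_pos hB] at h
  exact (inv_inj.1 (ENNReal.eq_inv_of_mul_eq_one_left h)).symm

lemma lintegral_comp_add_smul {E : Type*} [NormedAddCommGroup E] [NormedSpace ℝ E]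
    [MeasurableSpace E] [BorelSpace E] [FiniteDimensional ℝ E] (μ : Measure E)
    [μ.IsAddHaarMeasure] (g : E → ℝ≥0∞) (a : E) {c : ℝ} (hc : c ≠ 0) :
    ∫⁻ x, g x ∂μ = ENNReal.ofReal |c ^ Module.finrank ℝ E| * ∫⁻ v, g (a + c • v) ∂μ := by
  have hscale : ∫⁻ v, g (a + c • v) ∂μ = ∫⁻ y, g (a + y) ∂(μ.map (c • ·)) :=
    (lintegral_map_equiv (fun y => g (a + y))
      (Homeomorph.smulOfNeZero c hc).toMeasurableEquiv).symm
  rw [hscale, Measure.map_addHaar_smul μ hc, lintegral_smul_measure,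
    lintegral_add_left_eq_self, smul_eq_mul, ← mul_assoc, ← ENNReal.ofReal_mul (abs_nonneg _),
    ← abs_mul, mul_inv_cancel₀ (pow_ne_zero _ hc), abs_one, ENNReal.ofReal_one, one_mul]

lemma lintegral_eq_lintegral_lintegral_cons {n : ℕ} {f : (Fin (n + 1) → ℝ) → ℝ≥0∞}
    (hf : Measurable f) :
    ∫⁻ s, f s = ∫⁻ t, ∫⁻ r, f (Fin.cons t r) := by
  rw [← (volume_preserving_piFinSuccAbove (fun _ : Fin (n + 1) => ℝ) 0).symm.lintegral_comp hf,
    Measure.volume_eq_prod, lintegral_prod]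
  · simp only [MeasurableEquiv.piFinSuccAbove_symm_apply, Fin.insertNthEquiv,
      Equiv.coe_fn_mk, Fin.insertNth_zero']
  · exact (hf.comp (MeasurableEquiv.measurable _)).aemeasurable

section Simplex

variable {n : ℕ}

@[fun_prop]
lemma measurable_sPrev (k : Fin n) : Measurable fun s : Fin n → ℝ => sPrev s k := by
  unfold sPrev
  split_ifs
  exacts [measurable_const, measurable_pi_apply _]

lemma measurableSet_simplexSet (n : ℕ) : MeasurableSet (simplexSet n) := by
  simp only [simplexSet, Set.ofPred_and, Set.ofPred_forall]
  exact (MeasurableSet.iInter fun k =>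
      measurableSet_lt (measurable_sPrev k) (measurable_pi_apply k)).inter
    (MeasurableSet.iInter fun k => measurableSet_lt (measurable_pi_apply k) measurable_const)

lemma sPrev_zero (s : Fin (n + 1) → ℝ) : sPrev s 0 = 0 := rfl

lemma mem_Ioo_of_mem_simplexSet {s : Fin (n + 1) → ℝ} (hs : s ∈ simplexSet (n + 1)) :
    s 0 ∈ Set.Ioo 0 1 :=
  ⟨sPrev_zero s ▸ hs.1 0, hs.2 0⟩

def simplexLift (t : ℝ) (v : Fin n → ℝ) : Fin (n + 1) → ℝ :=
  Fin.cons t (Function.const _ t + (1 - t) • v)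

lemma simplexLift_zero (t : ℝ) (v : Fin n → ℝ) : simplexLift t v 0 = t := rfl

lemma simplexLift_succ (t : ℝ) (v : Fin n → ℝ) (k : Fin n) :
    simplexLift t v k.succ = t + (1 - t) * v k := rfl

lemma sPrev_simplexLift_succ (t : ℝ) (v : Fin n → ℝ) (k : Fin n) :
    sPrev (simplexLift t v) k.succ = t + (1 - t) * sPrev v k := by
  rcases k with ⟨_ | m, hm⟩
  · simp [sPrev, simplexLift]
  · simp only [sPrev, Nat.add_eq_zero_iff, one_ne_zero, and_false, if_false]
    exact simplexLift_succ t v ⟨m, by omega⟩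

lemma simplexLift_sub_sPrev_succ (t : ℝ) (v : Fin n → ℝ) (k : Fin n) :
    simplexLift t v k.succ - sPrev (simplexLift t v) k.succ = (1 - t) * (v k - sPrev v k) := by
  rw [simplexLift_succ, sPrev_simplexLift_succ]
  ring

lemma simplexLift_mem_simplexSet_iff {t : ℝ} (ht : t < 1) (v : Fin n → ℝ) :
    simplexLift t v ∈ simplexSet (n + 1) ↔ 0 < t ∧ v ∈ simplexSet n := by
  have h1t : 0 < 1 - t := sub_pos.2 ht
  have hgap (k : Fin n) :
      sPrev (simplexLift t v) k.succ < simplexLift t v k.succ ↔ sPrev v k < v k := by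
    rw [← sub_pos, simplexLift_sub_sPrev_succ, mul_pos_iff_of_pos_left h1t, sub_pos]
  have hlt_one (k : Fin n) : simplexLift t v k.succ < 1 ↔ v k < 1 := by
    rw [simplexLift_succ]
    constructor <;> intro h <;> nlinarith
  simp only [simplexSet, Set.mem_ofPred_eq, Fin.forall_fin_succ, hgap, hlt_one, sPrev_zero,
    simplexLift_zero, ht, true_and]
  tauto

noncomputable def simplexWeight (β : ℝ) (s : Fin n → ℝ) : ℝ≥0∞ :=
  ∏ k, ENNReal.ofReal ((s k - sPrev s k) ^ (β - 1))

@[fun_prop]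
lemma measurable_simplexWeight (β : ℝ) : Measurable (simplexWeight (n := n) β) := by
  unfold simplexWeight
  fun_prop

lemma simplexWeight_simplexLift {β t : ℝ} (ht : t < 1) {v : Fin n → ℝ}
    (hv : v ∈ simplexSet n) :
    simplexWeight β (simplexLift t v) =
      ENNReal.ofReal (t ^ (β - 1)) * ENNReal.ofReal ((1 - t) ^ (β - 1)) ^ n *
        simplexWeight β v := by
  have h1t : 0 < 1 - t := sub_pos.2 ht
  have hfactor (k : Fin n) :
      ENNReal.ofReal ((simplexLift t v k.succ - sPrev (simplexLift t v) k.succ) ^ (β - 1)) =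
        ENNReal.ofReal ((1 - t) ^ (β - 1)) * ENNReal.ofReal ((v k - sPrev v k) ^ (β - 1)) := by
    rw [simplexLift_sub_sPrev_succ, mul_rpow h1t.le (sub_pos.2 (hv.1 k)).le,
      ENNReal.ofReal_mul (rpow_nonneg h1t.le _)]
  rw [simplexWeight, Fin.prod_univ_succ, simplexLift_zero, sPrev_zero, sub_zero,
    Finset.prod_congr rfl fun k _ => hfactor k, Finset.prod_mul_distrib, Finset.prod_const,
    Finset.card_univ, Fintype.card_fin, ← mul_assoc, simplexWeight]

lemma pow_mul_rpow_sub_one_pow {x : ℝ} (hx : 0 < x) (β : ℝ) (n : ℕ) :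
    x ^ n * (x ^ (β - 1)) ^ n = x ^ (n * β) := by
  rw [← mul_pow, mul_comm, ← rpow_add_one hx.ne', sub_add_cancel, ← rpow_mul_natCast hx.le,
    mul_comm]

lemma lintegral_simplexWeight_cons {β t : ℝ} (ht : t ∈ Set.Ioo 0 1) :
    ∫⁻ r, (simplexSet (n + 1)).indicator (simplexWeight β) (Fin.cons t r) =
      ENNReal.ofReal (t ^ (β - 1) * (1 - t) ^ (n * β)) *
        ∫⁻ s in simplexSet n, simplexWeight β s := by
  obtain ⟨ht0, ht1⟩ := ht
  have h1t : 0 < 1 - t := sub_pos.2 ht1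
  have hlift (v : Fin n → ℝ) :
      (simplexSet (n + 1)).indicator (simplexWeight β) (simplexLift t v) =
        ENNReal.ofReal (t ^ (β - 1)) * ENNReal.ofReal ((1 - t) ^ (β - 1)) ^ n *
          (simplexSet n).indicator (simplexWeight β) v := by
    by_cases hv : v ∈ simplexSet n
    · rw [Set.indicator_of_mem ((simplexLift_mem_simplexSet_iff ht1 v).2 ⟨ht0, hv⟩),
        Set.indicator_of_mem hv, simplexWeight_simplexLift ht1 hv]
    · rw [Set.indicator_of_notMem (fun h => hv ((simplexLift_mem_simplexSet_iff ht1 v).1 h).2),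
        Set.indicator_of_notMem hv, mul_zero]
  have hchange := lintegral_comp_add_smul volume
    (fun r => (simplexSet (n + 1)).indicator (simplexWeight β) (Fin.cons t r))
    (Function.const _ t) h1t.ne'
  rw [Module.finrank_fin_fun, abs_of_pos (pow_pos h1t n)] at hchange
  calc _ = ENNReal.ofReal ((1 - t) ^ n) *
        ∫⁻ v, (simplexSet (n + 1)).indicator (simplexWeight β) (simplexLift t v) := hchange
    _ = ENNReal.ofReal ((1 - t) ^ n) * (ENNReal.ofReal (t ^ (β - 1)) *
          ENNReal.ofReal ((1 - t) ^ (β - 1)) ^ n * ∫⁻ s in simplexSet n, simplexWeight β s) := by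
      rw [lintegral_congr hlift, lintegral_const_mul _ ((measurable_simplexWeight β).indicator
        (measurableSet_simplexSet n)), lintegral_indicator (measurableSet_simplexSet n)]
    _ = _ := by
      rw [← ENNReal.ofReal_pow (rpow_nonneg h1t.le _), ← mul_assoc, ← mul_assoc,
        mul_comm (ENNReal.ofReal ((1 - t) ^ n)), mul_assoc (ENNReal.ofReal _),
        ← ENNReal.ofReal_mul (by positivity), pow_mul_rpow_sub_one_pow h1t,
        ← ENNReal.ofReal_mul (rpow_nonneg ht0.le _)]

end Simplex

lemma lintegral_simplexWeight_succ (β : ℝ) (n : ℕ) :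
    ∫⁻ s in simplexSet (n + 1), simplexWeight β s =
      (∫⁻ t in Set.Ioo 0 1, ENNReal.ofReal (t ^ (β - 1) * (1 - t) ^ (n * β))) *
        ∫⁻ s in simplexSet n, simplexWeight β s := by
  have hslice (t : ℝ) :
      ∫⁻ r, (simplexSet (n + 1)).indicator (simplexWeight β) (Fin.cons t r) =
        (Set.Ioo 0 1).indicator (fun t => ENNReal.ofReal (t ^ (β - 1) * (1 - t) ^ (n * β)) *
          ∫⁻ s in simplexSet n, simplexWeight β s) t := by
    by_cases ht : t ∈ Set.Ioo 0 1
    · rw [Set.indicator_of_mem ht, lintegral_simplexWeight_cons ht]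
    · rw [Set.indicator_of_notMem ht]
      exact (lintegral_congr fun r => Set.indicator_of_notMem
        (fun hs => ht (mem_Ioo_of_mem_simplexSet hs)) _).trans lintegral_zero
  rw [← lintegral_indicator (measurableSet_simplexSet _),
    lintegral_eq_lintegral_lintegral_cons
      ((measurable_simplexWeight β).indicator (measurableSet_simplexSet _)),
    lintegral_congr hslice, lintegral_indicator measurableSet_Ioo,
    lintegral_mul_const _ (by fun_prop)]

lemma lintegral_simplexWeight {β : ℝ} (hβ : 0 < β) (n : ℕ) :
    ∫⁻ s in simplexSet n, simplexWeight β s =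
      ENNReal.ofReal (Gamma β ^ n / Gamma (1 + n * β)) := by
  induction n with
  | zero => simp [simplexSet, simplexWeight, volume_pi]
  | succ n ih =>
    have hbeta := lintegral_rpow_mul_one_sub_rpow hβ (by positivity : 0 < n * β + 1)
    rw [add_sub_cancel_right] at hbeta
    rw [lintegral_simplexWeight_succ, ih, hbeta, ← ENNReal.ofReal_mul (by positivity)]
    congr 1
    have hΓ : Gamma (1 + n * β) ≠ 0 := (Gamma_pos_of_pos (by positivity)).ne'
    rw [show β + (n * β + 1) = 1 + (n + 1 : ℕ) * β by push_cast; ring, add_comm (n * β) 1,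
      pow_succ']
    field_simp

theorem simplex_beta_integral_general (n : ℕ) (β : ℝ) (hβ0 : 0 < β) :
    ∫ s in simplexSet n, ∏ k, (s k - sPrev s k) ^ (β - 1) =
      Real.Gamma β ^ n / Real.Gamma (1 + n * β) := by
  have hms := measurableSet_simplexSet n
  have hgap : ∀ s ∈ simplexSet n, ∀ k, 0 ≤ (s k - sPrev s k) ^ (β - 1) :=
    fun s hs k => rpow_nonneg (sub_pos.2 (hs.1 k)).le _
  rw [integral_eq_lintegral_of_nonneg_ae
      ((ae_restrict_iff' hms).2 (.of_forall fun s hs => Finset.prod_nonneg fun k _ => hgap s hs k))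
      (Measurable.aestronglyMeasurable (by fun_prop)),
    setLIntegral_congr_fun hms fun s hs => ENNReal.ofReal_prod_of_nonneg fun k _ => hgap s hs k]
  simp_rw [← simplexWeight.eq_1]
  rw [lintegral_simplexWeight hβ0 n, ENNReal.toReal_ofReal]
  exact div_nonneg (pow_nonneg (Gamma_pos_of_pos hβ0).le _) (Gamma_pos_of_pos (by positivity)).le

theorem simplex_beta_integral (n : ℕ) (hn : 1 ≤ n) (β : ℝ) (hβ0 : 0 < β) (hβ1 : β ≤ 1) :
    ∫ s in simplexSet n, ∏ k, (s k - sPrev s k) ^ (β - 1) =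
      Real.Gamma β ^ n / Real.Gamma (1 + n * β) :=
  simplex_beta_integral_general n β hβ0
end

section
/- For each fixed n ≥ 1, the function β ↦ W_n(β) = Γ(β)^n / Γ(1 + nβ) is strictly decreasing on (0,1]: if 0 < β_1 < β_2 ≤ 1 then W_n(β_1) > W_n(β_2). -/
open Real

/-- Slope monotonicity for convex functions with shifted endpoints. -/
lemma slope_mono4 {s : Set ℝ} {f : ℝ → ℝ} (hf : ConvexOn ℝ s f) {a b c d : ℝ}
    (ha : a ∈ s) (hb : b ∈ s) (hc : c ∈ s) (hd : d ∈ s)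
    (hab : a < b) (hcd : c < d) (hac : a ≤ c) (hbd : b ≤ d) :
    (f b - f a) / (b - a) ≤ (f d - f c) / (d - c) := by
  have had : a < d := lt_of_lt_of_le hab hbd
  have h1 : (f b - f a) / (b - a) ≤ (f d - f a) / (d - a) :=
    hf.secant_mono ha hb hd hab.ne' had.ne' hbd
  have h2 : (f a - f d) / (a - d) ≤ (f c - f d) / (c - d) :=
    hf.secant_mono hd ha hc had.ne hcd.ne hac
  have e1 : (f a - f d) / (a - d) = (f d - f a) / (d - a) := by
    rw [← neg_div_neg_eq]; ring_nf
  have e2 : (f c - f d) / (c - d) = (f d - f c) / (d - c) := by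
    rw [← neg_div_neg_eq]; ring_nf
  rw [e1, e2] at h2
  linarith

theorem Wn_strictAnti (n : ℕ) (hn : 1 ≤ n) (β₁ β₂ : ℝ)
    (h1 : 0 < β₁) (h12 : β₁ < β₂) (h2 : β₂ ≤ 1) :
    Real.Gamma β₂ ^ n / Real.Gamma (1 + n * β₂) <
      Real.Gamma β₁ ^ n / Real.Gamma (1 + n * β₁) := by
  have hn' : (1 : ℝ) ≤ (n : ℝ) := by exact_mod_cast hn
  have hnpos : (0 : ℝ) < n := by linarith
  have hb2 : (0 : ℝ) < β₂ := h1.trans h12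
  set f : ℝ → ℝ := Real.log ∘ Real.Gamma with hf
  have hconv : ConvexOn ℝ (Set.Ioi 0) f := Real.convexOn_log_Gamma
  -- positivity of all Gamma values
  have hG1 : 0 < Real.Gamma β₁ := Real.Gamma_pos_of_pos h1
  have hG2 : 0 < Real.Gamma β₂ := Real.Gamma_pos_of_pos hb2
  have hx1 : (0 : ℝ) < 1 + n * β₁ := by positivity
  have hx2 : (0 : ℝ) < 1 + n * β₂ := by positivity
  have hGn1 : 0 < Real.Gamma (1 + n * β₁) := Real.Gamma_pos_of_pos hx1
  have hGn2 : 0 < Real.Gamma (1 + n * β₂) := Real.Gamma_pos_of_pos hx2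
  -- recurrence: f (x + 1) = log x + f x for x > 0
  have hrec : ∀ x : ℝ, 0 < x → f (x + 1) = Real.log x + f x := by
    intro x hx
    simp only [hf, Function.comp_apply, Real.Gamma_add_one hx.ne']
    rw [Real.log_mul hx.ne' (Real.Gamma_pos_of_pos hx).ne']
  -- Step 1: strict slope inequality from [β₁, β₂] to [β₁+1, β₂+1]
  have hsub : 0 < β₂ - β₁ := by linarith
  have step1 : (f β₂ - f β₁) / (β₂ - β₁) < (f (β₂ + 1) - f (β₁ + 1)) / ((β₂ + 1) - (β₁ + 1)) := by
    rw [hrec β₁ h1, hrec β₂ hb2]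
    have hlog : Real.log β₁ < Real.log β₂ := Real.log_lt_log h1 h12
    have : (β₂ + 1) - (β₁ + 1) = β₂ - β₁ := by ring
    rw [this]
    rw [div_lt_div_iff₀ hsub hsub]
    nlinarith
  -- Step 2: slope monotone from [β₁+1, β₂+1] to [1+nβ₁, 1+nβ₂]
  have step2 : (f (β₂ + 1) - f (β₁ + 1)) / ((β₂ + 1) - (β₁ + 1))
      ≤ (f (1 + n * β₂) - f (1 + n * β₁)) / ((1 + n * β₂) - (1 + n * β₁)) := by
    apply slope_mono4 hconv (by simp [Set.mem_Ioi]; linarith) (by simp [Set.mem_Ioi]; linarith)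
      (by simpa [Set.mem_Ioi] using hx1) (by simpa [Set.mem_Ioi] using hx2)
    · linarith
    · nlinarith
    · nlinarith
    · nlinarith
  have key : (n : ℝ) * (f β₂ - f β₁) < f (1 + n * β₂) - f (1 + n * β₁) := by
    have h := lt_of_lt_of_le step1 step2
    have hden : (1 + n * β₂) - (1 + n * β₁) = n * (β₂ - β₁) := by ring
    rw [hden] at h
    have := (div_lt_div_iff₀ hsub (by positivity : (0:ℝ) < n * (β₂ - β₁))).mp h
    nlinarith
  -- conclude
  rw [div_lt_div_iff₀ hGn2 hGn1]
  have hlogkey : Real.log (Real.Gamma β₂ ^ n * Real.Gamma (1 + n * β₁))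
      < Real.log (Real.Gamma β₁ ^ n * Real.Gamma (1 + n * β₂)) := by
    rw [Real.log_mul (by positivity) hGn1.ne', Real.log_mul (by positivity) hGn2.ne',
      Real.log_pow, Real.log_pow]
    simp only [hf, Function.comp_apply] at key
    linarith
  have := Real.exp_lt_exp.mpr hlogkey
  rwa [Real.exp_log (by positivity), Real.exp_log (by positivity)] at this
end

section
/- For 0 < β < 1 and n ≥ 1, 1/n! < Γ(β)^n / Γ(1 + nβ), i.e., W_n(1) < W_n(β). -/
/-!
On `(0, 1)` the Gamma function strictly decreases to `Γ 1 = 1`, so `Γ β ^ n > 1`. On the other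
hand `1 + nβ` lies in `[1, n + 1]`, where the convex function `Γ` is at most its value
`Γ (n + 1) = n!` at the larger endpoint. Hence `Γ (1 + nβ) ≤ n! < n! Γ β ^ n`.
-/

open Real

namespace Real

theorem Gamma_le_factorial_of_mem_Icc (n : ℕ) {x : ℝ} (hx : x ∈ Set.Icc 1 ((n : ℝ) + 1)) :
    Gamma x ≤ n.factorial := by
  have hsegment : x ∈ segment ℝ (1 : ℝ) ((n : ℝ) + 1) := by
    rwa [segment_eq_Icc (by linarith [n.cast_nonneg (α := ℝ)])]
  have hpos : (0 : ℝ) < (n : ℝ) + 1 := by positivity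
  calc Gamma x ≤ max (Gamma 1) (Gamma ((n : ℝ) + 1)) :=
        convexOn_Gamma.le_on_segment (Set.mem_Ioi.mpr one_pos) (Set.mem_Ioi.mpr hpos) hsegment
    _ = n.factorial := by
        rw [Gamma_one, Gamma_nat_eq_factorial, max_eq_right (by exact_mod_cast n.factorial_pos)]

theorem one_lt_Gamma_of_mem_Ioo {β : ℝ} (hβ : β ∈ Set.Ioo 0 1) : 1 < Gamma β := by
  simpa [Gamma_one] using
    Gamma_strictAntiOn_Ioc ⟨hβ.1, hβ.2.le⟩ ⟨one_pos, le_rfl⟩ hβ.2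

end Real

theorem Wn_gt_factorial_inv (n : ℕ) (hn : 1 ≤ n) (β : ℝ) (hβ0 : 0 < β) (hβ1 : β < 1) :
    1 / (n.factorial : ℝ) < Real.Gamma β ^ n / Real.Gamma (1 + n * β) := by
  have hfactorial : (0 : ℝ) < n.factorial := by exact_mod_cast n.factorial_pos
  have hGamma_pos : 0 < Gamma (1 + n * β) := Gamma_pos_of_pos (by positivity)
  have hGamma_le : Gamma (1 + n * β) ≤ n.factorial := by
    refine Gamma_le_factorial_of_mem_Icc n ⟨le_add_of_nonneg_right (by positivity), ?_⟩
    linarith [mul_le_of_le_one_right n.cast_nonneg hβ1.le (a := (n : ℝ))]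
  have hpow : 1 < Gamma β ^ n :=
    one_lt_pow₀ (one_lt_Gamma_of_mem_Ioo ⟨hβ0, hβ1⟩) (by omega)
  rw [div_lt_div_iff₀ hfactorial hGamma_pos, one_mul]
  calc Gamma (1 + n * β) ≤ n.factorial := hGamma_le
    _ < Gamma β ^ n * n.factorial := lt_mul_of_one_lt_left hfactorial hpow
end

section
/- Let A = (A_1, ..., A_n) be real numbers with A_k > -1 for all k. Then ∫_{B} |x_1|^{A_1} |x_2|^{A_2} ⋯ |x_n|^{A_n} dx = (∏_{k=1}^n Γ((A_k+1)/2)) / Γ(D/2 + 1), where D = n + ∑_{k=1}^n A_k and B is the closed unit Euclidean ball in ℝ^n. -/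
open MeasureTheory Real Metric

/-- The monomial `|x|^A = ∏ |x_k|^{A_k}`. -/
noncomputable def monom {n : ℕ} (A : Fin n → ℝ) (x : EuclideanSpace ℝ (Fin n)) : ℝ :=
  ∏ k, |x k| ^ (A k)

/-- The normalizing constant `K_B(A)` for the unit ball. -/
noncomputable def ballK (n : ℕ) (A : Fin n → ℝ) : ℝ :=
  (∏ k, Real.Gamma ((A k + 1) / 2)) /
    Real.Gamma (((n : ℝ) + ∑ k, A k) / 2 + 1)

/-!
We compute `∫ |x|^A e^{-‖x‖²} dx` in two ways. In coordinates it factorises into the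
one-dimensional integrals `∫ |t|^a e^{-t²} dt = Γ((a+1)/2)`. Radially, write
`e^{-‖x‖²} = ∫_{r ≥ ‖x‖} 2r e^{-r²} dr` and swap the integrals: the result is
`∫_0^∞ 2r e^{-r²} I(r) dr`, where `I(r)` is the integral of `|x|^A` over the ball of radius `r`.
Since `|x|^A` is homogeneous of degree `∑ A`, scaling gives `I(r) = r^D I(1)` with
`D = n + ∑ A`, and the remaining radial integral is `Γ(D/2 + 1)`.
-/

open Set Filter Module
open scoped ENNReal Topology

lemma integral_Ioi_rpow_mul_exp_neg_sq {q : ℝ} (hq : -1 < q) :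
    ∫ t in Ioi (0 : ℝ), t ^ q * exp (-t ^ 2) = Gamma ((q + 1) / 2) / 2 := by
  simp_rw [← rpow_two]
  rw [integral_rpow_mul_exp_neg_rpow two_pos hq]
  ring

lemma integral_abs_rpow_mul_exp_neg_sq {a : ℝ} (ha : -1 < a) :
    ∫ t : ℝ, |t| ^ a * exp (-t ^ 2) = Gamma ((a + 1) / 2) := by
  have h : ∀ t : ℝ, |t| ^ a * exp (-t ^ 2) = (fun s => s ^ a * exp (-s ^ 2)) |t| := by
    simp [sq_abs]
  rw [integral_congr_ae (ae_of_all _ h), integral_comp_abs (f := fun t => t ^ a * exp (-t ^ 2)),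
    integral_Ioi_rpow_mul_exp_neg_sq ha]
  ring

lemma lintegral_Ioi_two_mul_rpow_mul_exp_neg_sq {q : ℝ} (hq : -1 < q) :
    ∫⁻ r in Ioi 0, ENNReal.ofReal (2 * r ^ q * exp (-r ^ 2)) =
      ENNReal.ofReal (Gamma ((q + 1) / 2)) := by
  have hint : IntegrableOn (fun r : ℝ => r ^ q * exp (-r ^ 2)) (Ioi 0) := by
    simpa using integrableOn_rpow_mul_exp_neg_mul_sq one_pos hq
  simp_rw [mul_assoc]
  rw [← ofReal_integral_eq_lintegral_ofReal (hint.const_mul 2), integral_const_mul,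
    integral_Ioi_rpow_mul_exp_neg_sq hq, mul_div_cancel₀ _ two_ne_zero]
  filter_upwards [ae_restrict_mem measurableSet_Ioi] with r (hr : 0 < r)
  positivity

lemma lintegral_Ici_two_mul_mul_exp_neg_sq {s : ℝ} (hs : 0 ≤ s) :
    ∫⁻ r in Ici s, ENNReal.ofReal (2 * r * exp (-r ^ 2)) = ENNReal.ofReal (exp (-s ^ 2)) := by
  have hderiv : ∀ r ∈ Ici s, HasDerivAt (fun r => -exp (-r ^ 2)) (2 * r * exp (-r ^ 2)) r :=
    fun r _ => ((hasDerivAt_pow 2 r).neg.exp.neg).congr_deriv (by simp; ring)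
  have hnonneg : ∀ r ∈ Ioi s, 0 ≤ 2 * r * exp (-r ^ 2) := fun r (hr : s < r) => by
    have : 0 < r := hs.trans_lt hr
    positivity
  have hlim : Tendsto (fun r : ℝ => -exp (-r ^ 2)) atTop (𝓝 (-0)) :=
    (tendsto_exp_neg_atTop_nhds_zero.comp (tendsto_pow_atTop two_ne_zero)).neg
  rw [setLIntegral_congr Ioi_ae_eq_Ici.symm, ← ofReal_integral_eq_lintegral_ofReal,
    integral_Ioi_of_hasDerivAt_of_nonneg' hderiv hnonneg hlim]
  · simp
  · exact integrableOn_Ioi_deriv_of_nonneg' hderiv hnonneg hlim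
  · exact (ae_restrict_mem measurableSet_Ioi).mono hnonneg

lemma lintegral_mul_exp_neg_norm_sq_eq_lintegral_closedBall {E : Type*} [NormedAddCommGroup E]
    [MeasurableSpace E] [OpensMeasurableSpace E] {μ : Measure E} [SFinite μ] {f : E → ℝ≥0∞}
    (hf : Measurable f) :
    ∫⁻ x, f x * ENNReal.ofReal (exp (-‖x‖ ^ 2)) ∂μ =
      ∫⁻ r, ENNReal.ofReal (2 * r * exp (-r ^ 2)) * ∫⁻ x in closedBall 0 r, f x ∂μ := by
  set g : ℝ → ℝ≥0∞ := fun r => ENNReal.ofReal (2 * r * exp (-r ^ 2))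
  have hg : Measurable g := by fun_prop
  set S : Set (E × ℝ) := {p | ‖p.1‖ ≤ p.2}
  have hS : MeasurableSet S := measurableSet_le (by fun_prop) (by fun_prop)
  have hmeas : Measurable (S.indicator fun p => f p.1 * g p.2) :=
    ((hf.comp measurable_fst).mul (hg.comp measurable_snd)).indicator hS
  calc ∫⁻ x, f x * ENNReal.ofReal (exp (-‖x‖ ^ 2)) ∂μ
      = ∫⁻ x, (∫⁻ r, S.indicator (fun p => f p.1 * g p.2) (x, r)) ∂μ := by
        refine lintegral_congr fun x => ?_
        rw [← lintegral_Ici_two_mul_mul_exp_neg_sq (norm_nonneg x), ← lintegral_const_mul _ hg,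
          ← lintegral_indicator measurableSet_Ici]
        simp only [S, indicator, mem_Ici, mem_ofPred_eq]
    _ = ∫⁻ r, ∫⁻ x, S.indicator (fun p => f p.1 * g p.2) (x, r) ∂μ :=
        lintegral_lintegral_swap (f := fun x r => S.indicator (fun p => f p.1 * g p.2) (x, r))
          hmeas.aemeasurable
    _ = ∫⁻ r, g r * ∫⁻ x in closedBall 0 r, f x ∂μ := by
        refine lintegral_congr fun r => ?_
        rw [← lintegral_const_mul _ hf, ← lintegral_indicator measurableSet_closedBall]
        simp only [S, indicator, mem_closedBall_zero_iff, mem_ofPred_eq, mul_comm]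

section Homogeneous

variable {E : Type*} [NormedAddCommGroup E] [NormedSpace ℝ E] [MeasurableSpace E] [BorelSpace E]
  [FiniteDimensional ℝ E] (μ : Measure E) [μ.IsAddHaarMeasure]

lemma lintegral_comp_smul (f : E → ℝ≥0∞) {r : ℝ} (hr : r ≠ 0) :
    ∫⁻ x, f (r • x) ∂μ = ENNReal.ofReal |(r ^ finrank ℝ E)⁻¹| * ∫⁻ x, f x ∂μ := by
  calc ∫⁻ x, f (r • x) ∂μ = ∫⁻ y, f y ∂(μ.map (r • ·)) :=
        (lintegral_map_equiv f (Homeomorph.smul (Units.mk0 r hr)).toMeasurableEquiv).symm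
    _ = _ := by rw [Measure.map_addHaar_smul μ hr, lintegral_smul_measure, smul_eq_mul]

def PosHomogeneous (f : E → ℝ≥0∞) (a : ℝ) : Prop :=
  ∀ ⦃t : ℝ⦄, 0 < t → ∀ x, f (t • x) = ENNReal.ofReal (t ^ a) * f x

variable {μ} {f : E → ℝ≥0∞} {a : ℝ}

lemma PosHomogeneous.setLIntegral_closedBall (hf : PosHomogeneous f a) {r : ℝ} (hr : 0 < r) :
    ∫⁻ x in closedBall 0 r, f x ∂μ =
      ENNReal.ofReal (r ^ (finrank ℝ E + a)) * ∫⁻ x in closedBall 0 1, f x ∂μ := by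
  have hind : ∀ x, (closedBall 0 r).indicator f (r • x) =
      ENNReal.ofReal (r ^ a) * (closedBall 0 1).indicator f x := by
    intro x
    simp only [indicator, mem_closedBall_zero_iff, norm_smul, norm_of_nonneg hr.le,
      mul_le_iff_le_one_right hr, hf hr]
    split_ifs <;> simp
  have key := lintegral_comp_smul μ ((closedBall 0 r).indicator f) hr.ne'
  rw [lintegral_congr hind, lintegral_const_mul' _ _ ENNReal.ofReal_ne_top,
    lintegral_indicator measurableSet_closedBall, lintegral_indicator measurableSet_closedBall,
    abs_of_pos (by positivity)] at key
  rw [rpow_add hr, rpow_natCast, ENNReal.ofReal_mul (by positivity), mul_assoc, key, ← mul_assoc,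
    ← ENNReal.ofReal_mul (by positivity), mul_inv_cancel₀ (by positivity), ENNReal.ofReal_one,
    one_mul]

lemma PosHomogeneous.lintegral_mul_exp_neg_norm_sq (hf : PosHomogeneous f a)
    (hf_meas : Measurable f) (ha : -2 < finrank ℝ E + a) :
    ∫⁻ x, f x * ENNReal.ofReal (exp (-‖x‖ ^ 2)) ∂μ =
      ENNReal.ofReal (Gamma ((finrank ℝ E + a) / 2 + 1)) * ∫⁻ x in closedBall 0 1, f x ∂μ := by
  have hsupp : (fun r : ℝ => ENNReal.ofReal (2 * r * exp (-r ^ 2)) *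
      ∫⁻ x in closedBall 0 r, f x ∂μ).support ⊆ Ioi 0 := by
    intro r hr
    rw [mem_Ioi]
    refine lt_of_not_ge fun hr0 => hr ?_
    simp only [mul_eq_zero, ENNReal.ofReal_eq_zero]
    exact .inl (mul_nonpos_of_nonpos_of_nonneg (by linarith) (exp_pos _).le)
  rw [lintegral_mul_exp_neg_norm_sq_eq_lintegral_closedBall hf_meas,
    ← setLIntegral_eq_of_support_subset hsupp]
  calc ∫⁻ r in Ioi 0, ENNReal.ofReal (2 * r * exp (-r ^ 2)) * ∫⁻ x in closedBall 0 r, f x ∂μ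
      = ∫⁻ r in Ioi 0, ENNReal.ofReal (2 * r ^ (finrank ℝ E + a + 1) * exp (-r ^ 2)) *
          ∫⁻ x in closedBall 0 1, f x ∂μ := by
        refine setLIntegral_congr_fun measurableSet_Ioi fun r (hr : 0 < r) => ?_
        rw [hf.setLIntegral_closedBall hr, ← mul_assoc, ← ENNReal.ofReal_mul (by positivity),
          rpow_add_one hr.ne']
        ring_nf
    _ = _ := by
        rw [lintegral_mul_const _ (by fun_prop), lintegral_Ioi_two_mul_rpow_mul_exp_neg_sq
          (by linarith)]
        ring_nf

end Homogeneous

lemma monom_nonneg {n : ℕ} (A : Fin n → ℝ) (x : EuclideanSpace ℝ (Fin n)) : 0 ≤ monom A x :=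
  Finset.prod_nonneg fun _ _ => rpow_nonneg (abs_nonneg _) _

lemma measurable_monom {n : ℕ} (A : Fin n → ℝ) : Measurable (monom A) := by
  unfold monom
  fun_prop

lemma posHomogeneous_monom {n : ℕ} (A : Fin n → ℝ) :
    PosHomogeneous (fun x => ENNReal.ofReal (monom A x)) (∑ k, A k) := by
  intro t ht x
  simp only [monom]
  rw [← ENNReal.ofReal_mul (by positivity), rpow_sum_of_pos ht, ← Finset.prod_mul_distrib]
  congr 1
  refine Finset.prod_congr rfl fun k _ => ?_
  rw [PiLp.smul_apply, smul_eq_mul, abs_mul, abs_of_pos ht, mul_rpow ht.le (abs_nonneg _)]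

lemma monom_mul_exp_neg_norm_sq {n : ℕ} (A : Fin n → ℝ) (x : EuclideanSpace ℝ (Fin n)) :
    monom A x * exp (-‖x‖ ^ 2) = ∏ k, |x k| ^ A k * exp (-x k ^ 2) := by
  rw [EuclideanSpace.norm_sq_eq, Finset.prod_mul_distrib, ← exp_sum, ← Finset.sum_neg_distrib]
  simp [monom]

lemma integral_monom_mul_exp_neg_norm_sq {n : ℕ} {A : Fin n → ℝ} (hA : ∀ k, -1 < A k) :
    ∫ x, monom A x * exp (-‖x‖ ^ 2) = ∏ k, Gamma ((A k + 1) / 2) := by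
  simp_rw [monom_mul_exp_neg_norm_sq]
  rw [← (PiLp.volume_preserving_toLp (Fin n)).integral_comp
      (MeasurableEquiv.toLp 2 _).measurableEmbedding,
    integral_fintype_prod_volume_eq_prod (fun k t => |t| ^ A k * exp (-t ^ 2))]
  exact Finset.prod_congr rfl fun k _ => integral_abs_rpow_mul_exp_neg_sq (hA k)

lemma prod_Gamma_pos {n : ℕ} {A : Fin n → ℝ} (hA : ∀ k, -1 < A k) :
    0 < ∏ k, Gamma ((A k + 1) / 2) :=
  Finset.prod_pos fun k _ => Gamma_pos_of_pos (by linarith [hA k])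

lemma lintegral_monom_mul_exp_neg_norm_sq {n : ℕ} {A : Fin n → ℝ} (hA : ∀ k, -1 < A k) :
    ∫⁻ x, ENNReal.ofReal (monom A x) * ENNReal.ofReal (exp (-‖x‖ ^ 2)) =
      ENNReal.ofReal (∏ k, Gamma ((A k + 1) / 2)) := by
  rw [← integral_monom_mul_exp_neg_norm_sq hA, ofReal_integral_eq_lintegral_ofReal]
  · simp_rw [ENNReal.ofReal_mul (monom_nonneg A _)]
  · refine .of_integral_ne_zero ?_
    exact (integral_monom_mul_exp_neg_norm_sq hA).symm ▸ (prod_Gamma_pos hA).ne'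
  · exact ae_of_all _ fun x => mul_nonneg (monom_nonneg A x) (exp_pos _).le

theorem ball_monomial_integral (n : ℕ) (A : Fin n → ℝ) (hA : ∀ k, -1 < A k) :
    ∫ x in closedBall (0 : EuclideanSpace ℝ (Fin n)) 1, monom A x =
      (∏ k, Real.Gamma ((A k + 1) / 2)) /
        Real.Gamma (((n : ℝ) + ∑ k, A k) / 2 + 1) := by
  have hD : 0 ≤ (n : ℝ) + ∑ k, A k := by
    have : (n : ℝ) + ∑ k, A k = ∑ k, (A k + 1) := by simp [Finset.sum_add_distrib, add_comm]
    exact this ▸ Finset.sum_nonneg fun k _ => by linarith [hA k]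
  have hΓ : 0 < Gamma (((n : ℝ) + ∑ k, A k) / 2 + 1) := Gamma_pos_of_pos (by positivity)
  have hgauss := (posHomogeneous_monom A).lintegral_mul_exp_neg_norm_sq (μ := volume)
    (measurable_monom A).ennreal_ofReal (by rw [finrank_euclideanSpace_fin]; linarith)
  rw [lintegral_monom_mul_exp_neg_norm_sq hA, finrank_euclideanSpace_fin] at hgauss
  rw [integral_eq_lintegral_of_nonneg_ae (ae_of_all _ (monom_nonneg A))
      (measurable_monom A).aestronglyMeasurable, eq_div_iff hΓ.ne', mul_comm,
    ← ENNReal.toReal_ofReal hΓ.le, ← ENNReal.toReal_mul, ← hgauss,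
    ENNReal.toReal_ofReal (prod_Gamma_pos hA).le]
end

section
/- Let Θ be a compact metric space, κ_1, κ_2, ... i.i.d. random elements of a measurable space S, and z : S × Θ → ℝ jointly measurable, continuous in θ for each s, with E[sup_{θ ∈ Θ} |z(κ_1, θ)|] < ∞. Then with probability one, sup_{θ ∈ Θ} |N^{-1} ∑_{i=1}^N z(κ_i, θ) − E z(κ_1, θ)| → 0 as N → ∞. -/
open MeasureTheory Filter ProbabilityTheory

/-! The maps `θ ↦ z(κᵢ, θ)` are i.i.d. integrable random elements of the separable Banach space
`C(Θ, ℝ)`, whose sup norm is the quantity in the conclusion, so the claim is the strong law of large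
numbers in `C(Θ, ℝ)`. The only work is measurability: the Borel σ-algebra of `C(Θ, ℝ)` is generated
by balls, and the distance to a fixed function is a supremum over a countable dense set of
evaluations. -/

lemma measurable_of_measurable_dist {α E : Type*} [MeasurableSpace α] [PseudoMetricSpace E]
    [SecondCountableTopology E] [MeasurableSpace E] [BorelSpace E] {f : α → E}
    (h : ∀ c, Measurable fun a => dist (f a) c) : Measurable f := by
  have hbasis : TopologicalSpace.IsTopologicalBasis {s : Set E | ∃ c r, s = Metric.ball c r} :=
    TopologicalSpace.isTopologicalBasis_of_isOpen_of_nhds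
      (by rintro _ ⟨c, r, rfl⟩; exact Metric.isOpen_ball)
      fun x u hx hu => by
        obtain ⟨ε, hε, hball⟩ := Metric.isOpen_iff.1 hu x hx
        exact ⟨Metric.ball x ε, ⟨x, ε, rfl⟩, Metric.mem_ball_self hε, hball⟩
  rw [BorelSpace.measurable_eq (α := E), hbasis.borel_eq_generateFrom]
  refine measurable_generateFrom ?_
  rintro _ ⟨c, r, rfl⟩
  exact h c measurableSet_Iio

lemma ContinuousMap.dist_eq_iSup_of_dense {Θ E : Type*} [TopologicalSpace Θ] [CompactSpace Θ]
    [PseudoMetricSpace E] {D : Set Θ} (hD : Dense D) (f g : C(Θ, E)) :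
    dist f g = ⨆ d : D, dist (f d) (g d) := by
  rw [ContinuousMap.dist_eq_iSup]
  exact (hD.ciSup' (by fun_prop)).symm

lemma ContinuousMap.measurable_of_measurable_eval {S Θ E : Type*} [MeasurableSpace S]
    [TopologicalSpace Θ] [CompactSpace Θ] [T2Space Θ] [SecondCountableTopology Θ]
    [PseudoMetricSpace E] [SecondCountableTopology E] [MeasurableSpace E] [BorelSpace E]
    [MeasurableSpace C(Θ, E)] [BorelSpace C(Θ, E)] {f : S → C(Θ, E)}
    (h : ∀ θ, Measurable fun s => f s θ) : Measurable f := by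
  obtain ⟨D, hDcount, hD⟩ := TopologicalSpace.exists_countable_dense Θ
  have : Countable D := hDcount.to_subtype
  refine measurable_of_measurable_dist fun c => ?_
  simp_rw [ContinuousMap.dist_eq_iSup_of_dense hD]
  exact Measurable.iSup fun d => (h d).dist measurable_const

theorem uniform_slln_general {Ω : Type*} [MeasurableSpace Ω] (μ : Measure Ω) [IsProbabilityMeasure μ]
    {S : Type*} [MeasurableSpace S]
    {Θ : Type*} [MetricSpace Θ] [CompactSpace Θ]
    [MeasurableSpace Θ]
    (κ : ℕ → Ω → S) (hmeas : ∀ i, Measurable (κ i))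
    (hindep : ProbabilityTheory.iIndepFun κ μ)
    (hident : ∀ i, Measure.map (κ i) μ = Measure.map (κ 0) μ)
    (z : S → Θ → ℝ) (hz : Measurable (Function.uncurry z))
    (hcont : ∀ s, Continuous (z s))
    (hint : Integrable (fun ω => ⨆ θ, |z (κ 0 ω) θ|) μ) :
    ∀ᵐ ω ∂μ, Tendsto
      (fun N : ℕ => ⨆ θ, |(N : ℝ)⁻¹ * ∑ i ∈ Finset.range N, z (κ i ω) θ -
        ∫ ω', z (κ 0 ω') θ ∂μ|)
      atTop (nhds 0) := by
  let : MeasurableSpace C(Θ, ℝ) := borel _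
  have : BorelSpace C(Θ, ℝ) := ⟨rfl⟩
  let f : S → C(Θ, ℝ) := fun s => ⟨z s, hcont s⟩
  have hf : Measurable f := ContinuousMap.measurable_of_measurable_eval fun θ =>
    hz.comp (measurable_id.prodMk measurable_const)
  have hf_int : Integrable (fun ω => f (κ 0 ω)) μ :=
    hint.mono' (hf.comp (hmeas 0)).aestronglyMeasurable <| Eventually.of_forall fun ω => by
      simp [ContinuousMap.norm_eq_iSup_norm, f]
  have hSL := strong_law_ae (fun i ω => f (κ i ω)) hf_int
    (fun i j hij => (hindep.indepFun hij).comp hf hf)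
    (fun i => (IdentDistrib.mk (hmeas i).aemeasurable (hmeas 0).aemeasurable
      (hident i)).comp hf)
  filter_upwards [hSL] with ω hω
  refine (tendsto_iff_norm_sub_tendsto_zero.1 hω).congr fun N => ?_
  simp [ContinuousMap.norm_eq_iSup_norm, ContinuousMap.integral_apply hf_int, f]

/-- Uniform strong law of large numbers (Fortet–Mourier LLN in `C(Θ)`). -/
theorem uniform_slln {Ω : Type*} [MeasurableSpace Ω] (μ : Measure Ω) [IsProbabilityMeasure μ]
    {S : Type*} [MeasurableSpace S]
    {Θ : Type*} [MetricSpace Θ] [CompactSpace Θ] [Nonempty Θ]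
    [MeasurableSpace Θ] [BorelSpace Θ]
    (κ : ℕ → Ω → S) (hmeas : ∀ i, Measurable (κ i))
    (hindep : ProbabilityTheory.iIndepFun κ μ)
    (hident : ∀ i, Measure.map (κ i) μ = Measure.map (κ 0) μ)
    (z : S → Θ → ℝ) (hz : Measurable (Function.uncurry z))
    (hcont : ∀ s, Continuous (z s))
    (hint : Integrable (fun ω => ⨆ θ, |z (κ 0 ω) θ|) μ) :
    ∀ᵐ ω ∂μ, Tendsto
      (fun N : ℕ => ⨆ θ, |(N : ℝ)⁻¹ * ∑ i ∈ Finset.range N, z (κ i ω) θ -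
        ∫ ω', z (κ 0 ω') θ ∂μ|)
      atTop (nhds 0) :=
  uniform_slln_general μ κ hmeas hindep hident z hz hcont hint
end
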